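/- Every finite faithful Haar system (ĥ_I)_{I∈𝒟_{≤n}} is distributionally equivalent to the standard Haar system (h_I)_{I∈𝒟_{≤n}}: for every family of scalars (a_I), the functions Σ a_I ĥ_I and Σ a_I h_I have the same distribution with respect to Lebesgue measure on [0,1). In particular, |supp ĥ_I| = |I| for all I ∈ 𝒟_{≤n}. -/

import Mathlib

/-!
The sets `[ĥ_I = ±1]` form a refining sequence of partitions of `[0, 1)`: faithfulness says
that the pieces `[ĥ_I = ±1]` at level `j + 1` are exactly the supports of the next level of the
system. Since `ĥ_I` is a signed sum of Haar functions on disjoint intervals, it takes the values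
`1` and `-1` on halves of its support, so by induction every piece of level `j` has measure
`2⁻ʲ`, just like the dyadic intervals. On a piece of the finest level every `ĥ_I` is constant:
`±1` for the ancestors of the piece, with the sign given by the half containing it, and `0`
otherwise. These are the values of `h_I` on the corresponding dyadic interval, so
`Σ a_I ĥ_I` and `Σ a_I h_I` are step functions with the same values on partitions whose pieces
have the same measures.
-/

open MeasureTheory

/-- The dyadic interval `[i / 2 ^ n, (i + 1) / 2 ^ n) ⊆ [0,1)`. -/
noncomputable def dyadicI (n i : ℕ) : Set ℝ :=
  Set.Ico ((i : ℝ) / 2 ^ n) ((i + 1 : ℝ) / 2 ^ n)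

/-- The Haar function `h_I = χ_{I⁺} - χ_{I⁻}` for `I = [i / 2 ^ n, (i + 1) / 2 ^ n)`. -/
noncomputable def haarF (n i : ℕ) : ℝ → ℝ := fun t =>
  (Set.Ico ((2 * i : ℝ) / 2 ^ (n + 1)) ((2 * i + 1 : ℝ) / 2 ^ (n + 1))).indicator
      (fun _ => (1 : ℝ)) t -
    (Set.Ico ((2 * i + 1 : ℝ) / 2 ^ (n + 1)) ((2 * i + 2 : ℝ) / 2 ^ (n + 1))).indicator
      (fun _ => (1 : ℝ)) t

theorem measure_biUnion_inter_preimage_of_const_on {α ι β : Type*} [MeasurableSpace α]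
    (μ : Measure α) {s : Finset ι} {C : ι → Set α} (hC : ∀ i ∈ s, MeasurableSet (C i))
    (hd : (s : Set ι).PairwiseDisjoint C) {f : α → β} {c : ι → β}
    (hf : ∀ i ∈ s, ∀ x ∈ C i, f x = c i) (S : Set β) [DecidablePred (· ∈ S)] :
    μ ((⋃ i ∈ s, C i) ∩ f ⁻¹' S) = ∑ i ∈ s with c i ∈ S, μ (C i) := by
  have hset : (⋃ i ∈ s, C i) ∩ f ⁻¹' S = ⋃ i ∈ s.filter (fun i => c i ∈ S), C i := by
    ext x
    simp only [Set.mem_inter_iff, Set.mem_iUnion, Set.mem_preimage, Finset.mem_filter,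
      exists_prop]
    constructor
    · rintro ⟨⟨i, hi, hx⟩, hfx⟩
      exact ⟨i, ⟨hi, hf i hi x hx ▸ hfx⟩, hx⟩
    · rintro ⟨i, ⟨hi, hci⟩, hx⟩
      exact ⟨⟨i, hi, hx⟩, (hf i hi x hx).symm ▸ hci⟩
  rw [hset, measure_biUnion_finset (hd.subset (Finset.coe_subset.2 (Finset.filter_subset _ _)))
    fun i hi => hC i (Finset.mem_filter.1 hi).1]

lemma ofReal_one_div_two_pow_succ (m : ℕ) :
    ENNReal.ofReal (1 / 2 ^ (m + 1)) = 2⁻¹ * ENNReal.ofReal (1 / 2 ^ m) := by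
  rw [← ENNReal.ofReal_ofNat 2, ← ENNReal.ofReal_inv_of_pos two_pos,
    ← ENNReal.ofReal_mul (by norm_num), pow_succ]
  congr 1
  ring

lemma volume_dyadicI (m k : ℕ) : volume (dyadicI m k) = ENNReal.ofReal (1 / 2 ^ m) := by
  rw [dyadicI, Real.volume_Ico]
  congr 1
  ring

lemma disjoint_dyadicI {m k k' : ℕ} (h : k ≠ k') : Disjoint (dyadicI m k) (dyadicI m k') := by
  wlog hlt : k < k' generalizing k k'
  · exact (this h.symm (by omega)).symm
  have : ((k : ℝ) + 1) / 2 ^ m ≤ (k' : ℝ) / 2 ^ m := by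
    gcongr
    exact_mod_cast hlt
  exact Set.Ico_disjoint_Ico.mpr ((min_le_left _ _).trans (this.trans (le_max_right _ _)))

lemma disjoint_dyadicI_halves (m k : ℕ) :
    Disjoint (dyadicI (m + 1) (2 * k)) (dyadicI (m + 1) (2 * k + 1)) :=
  disjoint_dyadicI (by omega)

lemma dyadicI_eq_union (m k : ℕ) :
    dyadicI m k = dyadicI (m + 1) (2 * k) ∪ dyadicI (m + 1) (2 * k + 1) := by
  simp only [dyadicI]
  push_cast
  rw [Set.Ico_union_Ico_eq_Ico]
  · congr 1 <;> ring
  · gcongr; norm_num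
  · gcongr; norm_num

lemma haarF_eq_indicator_sub (m k : ℕ) :
    haarF m k =
      (dyadicI (m + 1) (2 * k)).indicator 1 - (dyadicI (m + 1) (2 * k + 1)).indicator 1 := by
  ext t
  simp only [haarF, dyadicI, Pi.sub_apply, Pi.one_def]
  push_cast
  ring_nf

lemma measurable_haarF (m k : ℕ) : Measurable (haarF m k) := by
  rw [haarF_eq_indicator_sub]
  exact (measurable_const.indicator measurableSet_Ico).sub
    (measurable_const.indicator measurableSet_Ico)

lemma haarF_apply_of_mem_left {m k : ℕ} {t : ℝ} (h : t ∈ dyadicI (m + 1) (2 * k)) :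
    haarF m k t = 1 := by
  simp [haarF_eq_indicator_sub, h, Set.disjoint_left.1 (disjoint_dyadicI_halves m k) h]

lemma haarF_apply_of_mem_right {m k : ℕ} {t : ℝ} (h : t ∈ dyadicI (m + 1) (2 * k + 1)) :
    haarF m k t = -1 := by
  simp [haarF_eq_indicator_sub, h, Set.disjoint_right.1 (disjoint_dyadicI_halves m k) h]

lemma haarF_apply_of_notMem {m k : ℕ} {t : ℝ} (h : t ∉ dyadicI m k) : haarF m k t = 0 := by
  rw [dyadicI_eq_union, Set.mem_union, not_or] at h
  simp [haarF_eq_indicator_sub, h.1, h.2]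

lemma haarF_apply_eq_one_or_neg_one {m k : ℕ} {t : ℝ} (ht : t ∈ dyadicI m k) :
    haarF m k t = 1 ∨ haarF m k t = -1 := by
  rw [dyadicI_eq_union] at ht
  exact ht.imp haarF_apply_of_mem_left haarF_apply_of_mem_right

lemma support_haarF (m k : ℕ) : Function.support (haarF m k) = dyadicI m k := by
  ext t
  refine ⟨not_imp_comm.1 haarF_apply_of_notMem, fun ht => ?_⟩
  rcases haarF_apply_eq_one_or_neg_one ht with h | h <;> simp [h]

lemma haarF_apply_eq_one_iff {m k : ℕ} {t : ℝ} :
    haarF m k t = 1 ↔ t ∈ dyadicI (m + 1) (2 * k) := by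
  refine ⟨fun h => ?_, haarF_apply_of_mem_left⟩
  by_contra hl
  rcases em (t ∈ dyadicI (m + 1) (2 * k + 1)) with hr | hr
  · rw [haarF_apply_of_mem_right hr] at h
    norm_num at h
  · rw [haarF_apply_of_notMem (by rw [dyadicI_eq_union]; exact fun h' => h'.elim hl hr)] at h
    norm_num at h

lemma haarF_apply_eq_neg_one_iff {m k : ℕ} {t : ℝ} :
    haarF m k t = -1 ↔ t ∈ dyadicI (m + 1) (2 * k + 1) := by
  refine ⟨fun h => ?_, haarF_apply_of_mem_right⟩
  by_contra hr
  rcases em (t ∈ dyadicI (m + 1) (2 * k)) with hl | hl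
  · rw [haarF_apply_of_mem_left hl] at h
    norm_num at h
  · rw [haarF_apply_of_notMem (by rw [dyadicI_eq_union]; exact fun h' => h'.elim hl hr)] at h
    norm_num at h

lemma volume_setOf_haarF_eq {m k : ℕ} {c : ℝ} (hc : c = 1 ∨ c = -1) :
    volume {t | haarF m k t = c} = ENNReal.ofReal (1 / 2 ^ (m + 1)) := by
  rcases hc with rfl | rfl
  · simp only [haarF_apply_eq_one_iff, Set.ofPred_mem_eq, volume_dyadicI]
  · simp only [haarF_apply_eq_neg_one_iff, Set.ofPred_mem_eq, volume_dyadicI]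

structure IsFaithfulHaarSystem (n : ℕ) (𝓑 : ℕ → ℕ → Finset (ℕ × ℕ)) (θ : ℕ × ℕ → ℝ)
    (hhat : ℕ → ℕ → ℝ → ℝ) : Prop where
  sign : ∀ p, θ p = 1 ∨ θ p = -1
  disjoint : ∀ j ≤ n, ∀ i < 2 ^ j, ∀ p ∈ 𝓑 j i, ∀ q ∈ 𝓑 j i, p ≠ q →
    Disjoint (dyadicI p.1 p.2) (dyadicI q.1 q.2)
  hhat_eq : ∀ j ≤ n, ∀ i < 2 ^ j, hhat j i = fun t => ∑ p ∈ 𝓑 j i, θ p * haarF p.1 p.2 t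
  iUnion_root : (⋃ p ∈ 𝓑 0 0, dyadicI p.1 p.2) = Set.Ico (0 : ℝ) 1
  iUnion_halves : ∀ j < n, ∀ i < 2 ^ j,
    ((⋃ p ∈ 𝓑 (j + 1) (2 * i), dyadicI p.1 p.2) = {t | hhat j i t = 1}) ∧
    ((⋃ p ∈ 𝓑 (j + 1) (2 * i + 1), dyadicI p.1 p.2) = {t | hhat j i t = -1})

theorem isFaithfulHaarSystem_haarF (n : ℕ) :
    IsFaithfulHaarSystem n (fun j i => {(j, i)}) (fun _ => 1) haarF where
  sign _ := Or.inl rfl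
  disjoint _ _ _ _ p hp q hq hpq :=
    absurd ((Finset.mem_singleton.1 hp).trans (Finset.mem_singleton.1 hq).symm) hpq
  hhat_eq _ _ _ _ := by simp
  iUnion_root := by simp [dyadicI]
  iUnion_halves j _ i _ := by
    simp only [Finset.mem_singleton, Set.iUnion_iUnion_eq_left, haarF_apply_eq_one_iff,
      haarF_apply_eq_neg_one_iff, Set.ofPred_mem_eq, and_self]

/-- `haarCell hhat (j + 1) k` is the half `[ĥ_I = (-1) ^ k]` of the support of `ĥ_I`,
`I = dyadicI j (k / 2)`; for the standard Haar system it is `dyadicI (j + 1) k`. -/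
def haarCell (hhat : ℕ → ℕ → ℝ → ℝ) : ℕ → ℕ → Set ℝ
  | 0, _ => Set.Ico 0 1
  | j + 1, k => {t | hhat j (k / 2) t = (-1) ^ k}

lemma haarCell_succ (hhat : ℕ → ℕ → ℝ → ℝ) (j k : ℕ) :
    haarCell hhat (j + 1) k = {t | hhat j (k / 2) t = (-1) ^ k} := rfl

/-- The common value of `∑ a_I ĥ_I` on `haarCell hhat (n + 1) m`: `m / 2 ^ (n - j)` is the
ancestor of `m` at level `j + 1`. -/
def dyadicPathSum (a : ℕ → ℕ → ℝ) (n m : ℕ) : ℝ :=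
  ∑ j ∈ Finset.range (n + 1), a j (m / 2 ^ (n - j) / 2) * (-1) ^ (m / 2 ^ (n - j))

namespace IsFaithfulHaarSystem

variable {n : ℕ} {𝓑 : ℕ → ℕ → Finset (ℕ × ℕ)} {θ : ℕ × ℕ → ℝ} {hhat : ℕ → ℕ → ℝ → ℝ}
  {j i k : ℕ}

lemma sign_mul_self (hF : IsFaithfulHaarSystem n 𝓑 θ hhat) (p : ℕ × ℕ) : θ p * θ p = 1 := by
  rcases hF.sign p with h | h <;> rw [h] <;> norm_num

lemma sign_ne_zero (hF : IsFaithfulHaarSystem n 𝓑 θ hhat) (p : ℕ × ℕ) : θ p ≠ 0 :=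
  left_ne_zero_of_mul_eq_one (hF.sign_mul_self p)

lemma measurable_hhat (hF : IsFaithfulHaarSystem n 𝓑 θ hhat) (hj : j ≤ n) (hi : i < 2 ^ j) :
    Measurable (hhat j i) := by
  rw [hF.hhat_eq j hj i hi]
  exact Finset.measurable_sum _ fun p _ => (measurable_haarF p.1 p.2).const_mul (θ p)

lemma pairwiseDisjoint_dyadicI (hF : IsFaithfulHaarSystem n 𝓑 θ hhat) (hj : j ≤ n)
    (hi : i < 2 ^ j) : (𝓑 j i : Set (ℕ × ℕ)).PairwiseDisjoint fun p => dyadicI p.1 p.2 :=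
  fun p hp q hq => hF.disjoint j hj i hi p hp q hq

lemma hhat_apply_of_mem (hF : IsFaithfulHaarSystem n 𝓑 θ hhat) (hj : j ≤ n) (hi : i < 2 ^ j)
    {p : ℕ × ℕ} (hp : p ∈ 𝓑 j i) {t : ℝ} (ht : t ∈ dyadicI p.1 p.2) :
    hhat j i t = θ p * haarF p.1 p.2 t := by
  rw [hF.hhat_eq j hj i hi]
  refine Finset.sum_eq_single_of_mem p hp fun q hq hqp => ?_
  rw [haarF_apply_of_notMem (Set.disjoint_right.1 (hF.disjoint j hj i hi q hq p hp hqp) ht),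
    mul_zero]

lemma hhat_apply_eq_one_or_neg_one (hF : IsFaithfulHaarSystem n 𝓑 θ hhat) (hj : j ≤ n)
    (hi : i < 2 ^ j) {t : ℝ} (ht : t ∈ ⋃ p ∈ 𝓑 j i, dyadicI p.1 p.2) :
    hhat j i t = 1 ∨ hhat j i t = -1 := by
  obtain ⟨p, hp, hpt⟩ := Set.mem_iUnion₂.1 ht
  rw [hF.hhat_apply_of_mem hj hi hp hpt]
  rcases hF.sign p with h | h <;> rcases haarF_apply_eq_one_or_neg_one hpt with h' | h' <;>
    rw [h, h'] <;> norm_num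

lemma support_hhat (hF : IsFaithfulHaarSystem n 𝓑 θ hhat) (hj : j ≤ n) (hi : i < 2 ^ j) :
    Function.support (hhat j i) = ⋃ p ∈ 𝓑 j i, dyadicI p.1 p.2 := by
  ext t
  refine ⟨fun ht => ?_, fun ht => ?_⟩
  · rw [Function.mem_support, hF.hhat_eq j hj i hi] at ht
    obtain ⟨p, hp, hpt⟩ := Finset.exists_ne_zero_of_sum_ne_zero ht
    exact Set.mem_iUnion₂.2 ⟨p, hp, support_haarF p.1 p.2 ▸ right_ne_zero_of_mul hpt⟩
  · rcases hF.hhat_apply_eq_one_or_neg_one hj hi ht with h | h <;> simp [h]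

lemma setOf_hhat_eq (hF : IsFaithfulHaarSystem n 𝓑 θ hhat) (hj : j ≤ n) (hi : i < 2 ^ j)
    {c : ℝ} (hc : c ≠ 0) :
    {t | hhat j i t = c} = ⋃ p ∈ 𝓑 j i, {t | haarF p.1 p.2 t = θ p * c} := by
  ext t
  simp only [Set.mem_ofPred_eq, Set.mem_iUnion, exists_prop]
  constructor
  · intro h
    have ht : t ∈ Function.support (hhat j i) := by rw [Function.mem_support, h]; exact hc
    obtain ⟨p, hp, hpt⟩ := Set.mem_iUnion₂.1 (hF.support_hhat hj hi ▸ ht)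
    refine ⟨p, hp, ?_⟩
    rw [← h, hF.hhat_apply_of_mem hj hi hp hpt, ← mul_assoc, hF.sign_mul_self, one_mul]
  · rintro ⟨p, hp, h⟩
    have hpt : t ∈ dyadicI p.1 p.2 := support_haarF p.1 p.2 ▸
      (h ▸ mul_ne_zero (hF.sign_ne_zero p) hc : haarF p.1 p.2 t ≠ 0)
    rw [hF.hhat_apply_of_mem hj hi hp hpt, h, ← mul_assoc, hF.sign_mul_self, one_mul]

lemma volume_setOf_hhat_eq (hF : IsFaithfulHaarSystem n 𝓑 θ hhat) (hj : j ≤ n)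
    (hi : i < 2 ^ j) {c : ℝ} (hc : c = 1 ∨ c = -1) :
    volume {t | hhat j i t = c} = 2⁻¹ * volume (⋃ p ∈ 𝓑 j i, dyadicI p.1 p.2) := by
  have hc0 : c ≠ 0 := by rcases hc with rfl | rfl <;> norm_num
  have hsub (p : ℕ × ℕ) : {t | haarF p.1 p.2 t = θ p * c} ⊆ dyadicI p.1 p.2 := fun t ht =>
    support_haarF p.1 p.2 ▸ (ht.symm ▸ mul_ne_zero (hF.sign_ne_zero p) hc0 : haarF p.1 p.2 t ≠ 0)
  rw [hF.setOf_hhat_eq hj hi hc0,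
    measure_biUnion_finset
      (fun p hp q hq hpq => (hF.pairwiseDisjoint_dyadicI hj hi hp hq hpq).mono (hsub p) (hsub q))
      fun p _ => measurable_haarF p.1 p.2 (measurableSet_singleton _),
    measure_biUnion_finset (hF.pairwiseDisjoint_dyadicI hj hi) fun p _ => measurableSet_Ico,
    Finset.mul_sum]
  refine Finset.sum_congr rfl fun p _ => ?_
  rw [volume_setOf_haarF_eq, volume_dyadicI, ofReal_one_div_two_pow_succ]
  rcases hF.sign p with h | h <;> rcases hc with rfl | rfl <;> rw [h] <;> norm_num

lemma haarCell_eq_iUnion (hF : IsFaithfulHaarSystem n 𝓑 θ hhat) (hj : j ≤ n) (hk : k < 2 ^ j) :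
    haarCell hhat j k = ⋃ p ∈ 𝓑 j k, dyadicI p.1 p.2 := by
  cases j with
  | zero =>
    obtain rfl : k = 0 := by simpa using hk
    exact hF.iUnion_root.symm
  | succ j =>
    obtain ⟨i, rfl | rfl⟩ := Nat.even_or_odd' k
    · rw [haarCell_succ, show 2 * i / 2 = i by omega, pow_mul, neg_one_sq, one_pow]
      exact (hF.iUnion_halves j (by omega) i (by omega)).1.symm
    · rw [haarCell_succ, show (2 * i + 1) / 2 = i by omega, pow_succ, pow_mul, neg_one_sq,
        one_pow, one_mul]
      exact (hF.iUnion_halves j (by omega) i (by omega)).2.symm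

lemma measurableSet_haarCell (hF : IsFaithfulHaarSystem n 𝓑 θ hhat) (hj : j ≤ n + 1)
    (hk : k < 2 ^ j) : MeasurableSet (haarCell hhat j k) := by
  cases j with
  | zero => exact measurableSet_Ico
  | succ j =>
    exact hF.measurable_hhat (by omega) (by rw [pow_succ] at hk; omega)
      (measurableSet_singleton _)

lemma haarCell_succ_subset (hF : IsFaithfulHaarSystem n 𝓑 θ hhat) (hj : j ≤ n)
    (hk : k < 2 ^ (j + 1)) : haarCell hhat (j + 1) k ⊆ haarCell hhat j (k / 2) := by
  have hk' : k / 2 < 2 ^ j := by rw [pow_succ] at hk; omega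
  intro t ht
  rw [hF.haarCell_eq_iUnion hj hk', ← hF.support_hhat hj hk', Function.mem_support,
    show hhat j (k / 2) t = (-1) ^ k from ht]
  exact pow_ne_zero _ (by norm_num)

lemma haarCell_subset_div_pow (hF : IsFaithfulHaarSystem n 𝓑 θ hhat) {d : ℕ}
    (h : j + d ≤ n + 1) (hk : k < 2 ^ (j + d)) :
    haarCell hhat (j + d) k ⊆ haarCell hhat j (k / 2 ^ d) := by
  induction d generalizing k with
  | zero => simp
  | succ d ih =>
    have hk' : k / 2 < 2 ^ (j + d) := by rw [← add_assoc, pow_succ] at hk; omega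
    calc haarCell hhat (j + d + 1) k ⊆ haarCell hhat (j + d) (k / 2) :=
          hF.haarCell_succ_subset (by omega) hk
      _ ⊆ haarCell hhat j (k / 2 / 2 ^ d) := ih (by omega) hk'
      _ = haarCell hhat j (k / 2 ^ (d + 1)) := by rw [Nat.div_div_eq_div_mul, pow_succ']

lemma volume_haarCell (hF : IsFaithfulHaarSystem n 𝓑 θ hhat) (hj : j ≤ n + 1)
    (hk : k < 2 ^ j) : volume (haarCell hhat j k) = ENNReal.ofReal (1 / 2 ^ j) := by
  induction j generalizing k with
  | zero => simp [haarCell]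
  | succ j ih =>
    have hk' : k / 2 < 2 ^ j := by rw [pow_succ] at hk; omega
    rw [haarCell_succ, hF.volume_setOf_hhat_eq (by omega) hk' (neg_one_pow_eq_or ℝ k),
      ← hF.haarCell_eq_iUnion (by omega) hk', ih (by omega) hk', ofReal_one_div_two_pow_succ]

lemma pairwiseDisjoint_haarCell (hF : IsFaithfulHaarSystem n 𝓑 θ hhat) (hj : j ≤ n + 1) :
    (Finset.range (2 ^ j) : Set ℕ).PairwiseDisjoint (haarCell hhat j) := by
  induction j with
  | zero => simp
  | succ j ih =>
    intro k hk k' hk' hkk'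
    simp only [Finset.coe_range, Set.mem_Iio] at hk hk'
    by_cases hsibling : k / 2 = k' / 2
    · have hsign : ((-1) ^ k : ℝ) ≠ (-1) ^ k' := by
        rw [neg_one_pow_eq_pow_mod_two, neg_one_pow_eq_pow_mod_two (n := k')]
        rcases Nat.mod_two_eq_zero_or_one k with h | h <;>
          rcases Nat.mod_two_eq_zero_or_one k' with h' | h' <;> rw [h, h'] <;>
            first | omega | norm_num
      refine Set.disjoint_left.2 fun t ht ht' => hsign ?_
      rw [← show hhat j (k / 2) t = (-1) ^ k from ht,
        ← show hhat j (k' / 2) t = (-1) ^ k' from ht', hsibling]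
    · have hpow : (2 : ℕ) ^ (j + 1) = 2 ^ j * 2 := pow_succ 2 j
      exact (ih (by omega) (by simp; omega) (by simp; omega) hsibling).mono
        (hF.haarCell_succ_subset (by omega) hk) (hF.haarCell_succ_subset (by omega) hk')

lemma iUnion_haarCell (hF : IsFaithfulHaarSystem n 𝓑 θ hhat) (hj : j ≤ n + 1) :
    ⋃ k ∈ Finset.range (2 ^ j), haarCell hhat j k = Set.Ico 0 1 := by
  induction j with
  | zero => simp [haarCell]
  | succ j ih =>
    rw [← ih (by omega)]
    ext t
    simp only [Set.mem_iUnion, Finset.mem_range, exists_prop]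
    constructor
    · rintro ⟨k, hk, ht⟩
      exact ⟨k / 2, by rw [pow_succ] at hk; omega, hF.haarCell_succ_subset (by omega) hk ht⟩
    · rintro ⟨i, hi, ht⟩
      rw [hF.haarCell_eq_iUnion (by omega) hi] at ht
      rcases hF.hhat_apply_eq_one_or_neg_one (by omega) hi ht with h | h
      · refine ⟨2 * i, by rw [pow_succ]; omega, ?_⟩
        rw [haarCell_succ, Set.mem_ofPred_eq, show 2 * i / 2 = i by omega, h, pow_mul,
          neg_one_sq, one_pow]
      · refine ⟨2 * i + 1, by rw [pow_succ]; omega, ?_⟩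
        rw [haarCell_succ, Set.mem_ofPred_eq, show (2 * i + 1) / 2 = i by omega, h, pow_succ,
          pow_mul, neg_one_sq, one_pow, one_mul]

lemma hhat_apply_of_mem_haarCell_succ (hF : IsFaithfulHaarSystem n 𝓑 θ hhat) {q : ℕ}
    (hj : j ≤ n) (hq : q < 2 ^ (j + 1)) (hk : k < 2 ^ j) {t : ℝ}
    (ht : t ∈ haarCell hhat (j + 1) q) : hhat j k t = if k = q / 2 then (-1) ^ q else 0 := by
  split_ifs with hkq
  · exact hkq ▸ ht
  · have hparent := hF.haarCell_succ_subset hj hq ht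
    have hk' : t ∉ haarCell hhat j k := Set.disjoint_left.1
      (hF.pairwiseDisjoint_haarCell (by omega) (by simp; rw [pow_succ] at hq; omega)
        (by simpa using hk) (Ne.symm hkq)) hparent
    rwa [hF.haarCell_eq_iUnion hj hk, ← hF.support_hhat hj hk, Function.notMem_support] at hk'

lemma sum_hhat_apply_of_mem_haarCell (hF : IsFaithfulHaarSystem n 𝓑 θ hhat)
    (a : ℕ → ℕ → ℝ) {m : ℕ} (hm : m < 2 ^ (n + 1)) {t : ℝ}
    (ht : t ∈ haarCell hhat (n + 1) m) :
    ∑ j ∈ Finset.range (n + 1), ∑ i ∈ Finset.range (2 ^ j), a j i * hhat j i t =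
      dyadicPathSum a n m := by
  refine Finset.sum_congr rfl fun j hj => ?_
  have hjn : j ≤ n := Nat.lt_succ_iff.1 (Finset.mem_range.1 hj)
  have hsplit : j + 1 + (n - j) = n + 1 := by omega
  set q := m / 2 ^ (n - j)
  have hq : q < 2 ^ (j + 1) := Nat.div_lt_of_lt_mul (by rwa [← pow_add, add_comm, hsplit])
  have htq : t ∈ haarCell hhat (j + 1) q :=
    hF.haarCell_subset_div_pow hsplit.le (hsplit ▸ hm) (hsplit ▸ ht)
  calc ∑ i ∈ Finset.range (2 ^ j), a j i * hhat j i t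
      = ∑ i ∈ Finset.range (2 ^ j), a j i * if i = q / 2 then (-1) ^ q else 0 :=
        Finset.sum_congr rfl fun i hi => by
          rw [hF.hhat_apply_of_mem_haarCell_succ hjn hq (Finset.mem_range.1 hi) htq]
    _ = a j (q / 2) * (-1) ^ q := by
        rw [pow_succ] at hq
        simp [mul_ite, Finset.sum_ite_eq', show q / 2 < 2 ^ j by omega]

lemma volume_Ico_inter_preimage_sum (hF : IsFaithfulHaarSystem n 𝓑 θ hhat)
    (a : ℕ → ℕ → ℝ) (s : Set ℝ) [DecidablePred (· ∈ s)] :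
    volume (Set.Ico (0 : ℝ) 1 ∩ (fun t => ∑ j ∈ Finset.range (n + 1),
        ∑ i ∈ Finset.range (2 ^ j), a j i * hhat j i t) ⁻¹' s) =
      ∑ m ∈ Finset.range (2 ^ (n + 1)) with dyadicPathSum a n m ∈ s,
        ENNReal.ofReal (1 / 2 ^ (n + 1)) := by
  rw [← hF.iUnion_haarCell le_rfl,
    measure_biUnion_inter_preimage_of_const_on volume
      (fun m hm => hF.measurableSet_haarCell le_rfl (Finset.mem_range.1 hm))
      (hF.pairwiseDisjoint_haarCell le_rfl)
      (fun m hm t ht => hF.sum_hhat_apply_of_mem_haarCell a (Finset.mem_range.1 hm) ht) s]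
  exact Finset.sum_congr rfl fun m hm =>
    hF.volume_haarCell le_rfl (Finset.mem_range.1 (Finset.mem_filter.1 hm).1)

lemma volume_support_hhat (hF : IsFaithfulHaarSystem n 𝓑 θ hhat) (hj : j ≤ n)
    (hi : i < 2 ^ j) : volume (Function.support (hhat j i)) = ENNReal.ofReal (1 / 2 ^ j) := by
  rw [hF.support_hhat hj hi, ← hF.haarCell_eq_iUnion hj hi, hF.volume_haarCell (by omega) hi]

end IsFaithfulHaarSystem

theorem faithful_haar_system_distributionally_equivalent_general
    (n : ℕ) (𝓑 : ℕ → ℕ → Finset (ℕ × ℕ)) (θ : ℕ × ℕ → ℝ)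
    (hhat : ℕ → ℕ → ℝ → ℝ)
    (hθ : ∀ p, θ p = 1 ∨ θ p = -1)
    (hdisjoint_within : ∀ j ≤ n, ∀ i < 2 ^ j, ∀ p ∈ 𝓑 j i, ∀ q ∈ 𝓑 j i, p ≠ q →
      Disjoint (dyadicI p.1 p.2) (dyadicI q.1 q.2))
    (hdef : ∀ j ≤ n, ∀ i < 2 ^ j,
      hhat j i = fun t => ∑ p ∈ 𝓑 j i, θ p * haarF p.1 p.2 t)
    (hroot : (⋃ p ∈ 𝓑 0 0, dyadicI p.1 p.2) = Set.Ico (0 : ℝ) 1)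
    (hfaithful : ∀ j < n, ∀ i < 2 ^ j,
      ((⋃ p ∈ 𝓑 (j + 1) (2 * i), dyadicI p.1 p.2) = {t | hhat j i t = 1}) ∧
      ((⋃ p ∈ 𝓑 (j + 1) (2 * i + 1), dyadicI p.1 p.2) = {t | hhat j i t = -1})) :
    (∀ (a : ℕ → ℕ → ℝ) (s : Set ℝ), MeasurableSet s →
      volume (Set.Ico (0 : ℝ) 1 ∩
        (fun t => ∑ j ∈ Finset.range (n + 1), ∑ i ∈ Finset.range (2 ^ j),
          a j i * hhat j i t) ⁻¹' s) =
      volume (Set.Ico (0 : ℝ) 1 ∩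
        (fun t => ∑ j ∈ Finset.range (n + 1), ∑ i ∈ Finset.range (2 ^ j),
          a j i * haarF j i t) ⁻¹' s)) ∧
    (∀ j ≤ n, ∀ i < 2 ^ j,
      volume (Function.support (hhat j i)) = ENNReal.ofReal (1 / 2 ^ j)) := by
  classical
  have hF : IsFaithfulHaarSystem n 𝓑 θ hhat := ⟨hθ, hdisjoint_within, hdef, hroot, hfaithful⟩
  refine ⟨fun a s _ => ?_, fun j hj i hi => hF.volume_support_hhat hj hi⟩
  rw [hF.volume_Ico_inter_preimage_sum,
    (isFaithfulHaarSystem_haarF n).volume_Ico_inter_preimage_sum]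

/-- A finite faithful Haar system `(ĥ_I)_{I ∈ 𝒟_{≤ n}}` (indexed by pairs `(j, i)`,
`j ≤ n`, `i < 2 ^ j`; the collections `𝓑 j i` of dyadic intervals are encoded as finsets
of pairs `(m, k)` with `k < 2 ^ m`) is distributionally equivalent to the standard Haar
system `(h_I)_{I ∈ 𝒟_{≤ n}}`: for every family of scalars `(a_I)`, the functions
`Σ a_I ĥ_I` and `Σ a_I h_I` have the same distribution on `[0,1)`.  In particular,
`|supp ĥ_I| = |I|` for all `I ∈ 𝒟_{≤ n}`. -/
theorem faithful_haar_system_distributionally_equivalent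
    (n : ℕ) (𝓑 : ℕ → ℕ → Finset (ℕ × ℕ)) (θ : ℕ × ℕ → ℝ)
    (hhat : ℕ → ℕ → ℝ → ℝ)
    (hθ : ∀ p, θ p = 1 ∨ θ p = -1)
    (hvalid : ∀ j ≤ n, ∀ i < 2 ^ j, ∀ p ∈ 𝓑 j i, p.2 < 2 ^ p.1)
    (hne : ∀ j ≤ n, ∀ i < 2 ^ j, (𝓑 j i).Nonempty)
    (hdisjoint_within : ∀ j ≤ n, ∀ i < 2 ^ j, ∀ p ∈ 𝓑 j i, ∀ q ∈ 𝓑 j i, p ≠ q →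
      Disjoint (dyadicI p.1 p.2) (dyadicI q.1 q.2))
    (hdisjoint_between : ∀ j ≤ n, ∀ i < 2 ^ j, ∀ j' ≤ n, ∀ i' < 2 ^ j',
      (j, i) ≠ (j', i') → 𝓑 j i ∩ 𝓑 j' i' = ∅)
    (hdef : ∀ j ≤ n, ∀ i < 2 ^ j,
      hhat j i = fun t => ∑ p ∈ 𝓑 j i, θ p * haarF p.1 p.2 t)
    (hroot : (⋃ p ∈ 𝓑 0 0, dyadicI p.1 p.2) = Set.Ico (0 : ℝ) 1)
    (hfaithful : ∀ j < n, ∀ i < 2 ^ j,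
      ((⋃ p ∈ 𝓑 (j + 1) (2 * i), dyadicI p.1 p.2) = {t | hhat j i t = 1}) ∧
      ((⋃ p ∈ 𝓑 (j + 1) (2 * i + 1), dyadicI p.1 p.2) = {t | hhat j i t = -1})) :
    (∀ (a : ℕ → ℕ → ℝ) (s : Set ℝ), MeasurableSet s →
      volume (Set.Ico (0 : ℝ) 1 ∩
        (fun t => ∑ j ∈ Finset.range (n + 1), ∑ i ∈ Finset.range (2 ^ j),
          a j i * hhat j i t) ⁻¹' s) =
      volume (Set.Ico (0 : ℝ) 1 ∩
        (fun t => ∑ j ∈ Finset.range (n + 1), ∑ i ∈ Finset.range (2 ^ j),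
          a j i * haarF j i t) ⁻¹' s)) ∧
    (∀ j ≤ n, ∀ i < 2 ^ j,
      volume (Function.support (hhat j i)) = ENNReal.ofReal (1 / 2 ^ j)) :=
  faithful_haar_system_distributionally_equivalent_general n 𝓑 θ hhat hθ hdisjoint_within hdef hroot
    hfaithful
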